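/- arXiv:1412.5581 — 3 statements merged into one kernel-verified Lean document; each statement's English description precedes it below -/
import Mathlib

section
/- F̃·T = 2σθ·F − (σ² − θ²)·F̃, where T = F² + F̃². -/
/-!
`F̃` is obtained from `F` by the duality `(e, b) ↦ (b, -e)`, and a direct computation gives
`F̃ F = u • 1` and `F² - F̃² = 2v • 1`.
Hence `F̃ T = (F̃ F) F + F̃ (F² - 2v • 1) = 2u • F - 2v • F̃`. On the other side, `σ + iθ` is a
square root of `2(v + iu)`, i.e. `σθ = u` and `σ² - θ² = 2v`.
-/

open Matrix

section FieldTensor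

variable {R : Type*} [CommRing R] (e₁ e₂ e₃ b₁ b₂ b₃ : R)

def fieldTensor : Matrix (Fin 4) (Fin 4) R :=
  !![0, b₃, -b₂, e₁; -b₃, 0, b₁, e₂; b₂, -b₁, 0, e₃; e₁, e₂, e₃, 0]

def dualFieldTensor : Matrix (Fin 4) (Fin 4) R :=
  !![0, -e₃, e₂, b₁; e₃, 0, -e₁, b₂; -e₂, e₁, 0, b₃; b₁, b₂, b₃, 0]

theorem dualFieldTensor_mul_fieldTensor :
    dualFieldTensor e₁ e₂ e₃ b₁ b₂ b₃ * fieldTensor e₁ e₂ e₃ b₁ b₂ b₃ =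
      (e₁ * b₁ + e₂ * b₂ + e₃ * b₃) • 1 := by
  ext i j
  fin_cases i <;> fin_cases j <;>
    simp [fieldTensor, dualFieldTensor, mul_apply, Fin.sum_univ_four] <;> ring

theorem fieldTensor_sq_sub_dualFieldTensor_sq :
    fieldTensor e₁ e₂ e₃ b₁ b₂ b₃ ^ 2 - dualFieldTensor e₁ e₂ e₃ b₁ b₂ b₃ ^ 2 =
      ((e₁ ^ 2 + e₂ ^ 2 + e₃ ^ 2) - (b₁ ^ 2 + b₂ ^ 2 + b₃ ^ 2)) • 1 := by
  ext i j
  fin_cases i <;> fin_cases j <;>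
    simp [fieldTensor, dualFieldTensor, pow_two] <;> ring

end FieldTensor

theorem mul_sq_add_sq_of_mul_eq_smul_one {R A : Type*} [CommRing R] [Ring A] [Algebra R A]
    {a b : A} {c d : R} (hba : b * a = c • 1) (hsq : a ^ 2 - b ^ 2 = d • 1) :
    b * (a ^ 2 + b ^ 2) = (2 * c) • a - d • b := by
  have hb2 : b ^ 2 = a ^ 2 - d • 1 := by rw [← hsq, sub_sub_cancel]
  calc b * (a ^ 2 + b ^ 2) = (b * a) * a + (b * a) * a - d • b := by
        rw [hb2, mul_add, mul_sub, mul_smul_comm, mul_one, pow_two, ← mul_assoc]; abel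
    _ = (2 * c) • a - d • b := by rw [hba, smul_one_mul, two_mul, add_smul]

section SquareRoot

variable (u v : ℝ)

theorem abs_le_sqrt_sq_add_sq : |v| ≤ √(u ^ 2 + v ^ 2) :=
  Real.abs_le_sqrt (le_add_of_nonneg_left (sq_nonneg u))

theorem sqrt_sq_add_sq_add_nonneg : 0 ≤ √(u ^ 2 + v ^ 2) + v := by
  linarith [neg_abs_le v, abs_le_sqrt_sq_add_sq u v]

theorem sqrt_sq_add_sq_sub_nonneg : 0 ≤ √(u ^ 2 + v ^ 2) - v := by
  linarith [le_abs_self v, abs_le_sqrt_sq_add_sq u v]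

theorem sqrt_add_mul_sqrt_sub_eq_abs :
    √(√(u ^ 2 + v ^ 2) + v) * √(√(u ^ 2 + v ^ 2) - v) = |u| := by
  have hprod : (√(u ^ 2 + v ^ 2) + v) * (√(u ^ 2 + v ^ 2) - v) = u ^ 2 := by
    rw [← sq_sub_sq, Real.sq_sqrt (by positivity), add_sub_cancel_right]
  rw [← Real.sqrt_mul (sqrt_sq_add_sq_add_nonneg u v), hprod, Real.sqrt_sq_eq_abs]

theorem sqrt_add_mul_signed_sqrt_sub :
    √(√(u ^ 2 + v ^ 2) + v) * ((if u < 0 then -1 else 1) * √(√(u ^ 2 + v ^ 2) - v)) = u := by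
  rw [mul_left_comm, sqrt_add_mul_sqrt_sub_eq_abs]
  split_ifs with hu
  · rw [abs_of_neg hu, neg_one_mul, neg_neg]
  · rw [abs_of_nonneg (not_lt.mp hu), one_mul]

theorem sq_sqrt_add_sub_sq_signed_sqrt_sub :
    √(√(u ^ 2 + v ^ 2) + v) ^ 2 - ((if u < 0 then -1 else 1) * √(√(u ^ 2 + v ^ 2) - v)) ^ 2
      = 2 * v := by
  have hsign : (if u < 0 then (-1 : ℝ) else 1) ^ 2 = 1 := by split_ifs <;> norm_num
  rw [mul_pow, hsign, one_mul, Real.sq_sqrt (sqrt_sq_add_sq_add_nonneg u v),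
    Real.sq_sqrt (sqrt_sq_add_sq_sub_nonneg u v)]
  ring

end SquareRoot

theorem Ft_mul_T
(e1 e2 e3 b1 b2 b3 u v σ θ : ℝ)
    (hu : u = e1 * b1 + e2 * b2 + e3 * b3)
    (hv : v = ((e1 ^ 2 + e2 ^ 2 + e3 ^ 2) - (b1 ^ 2 + b2 ^ 2 + b3 ^ 2)) / 2)
    (hσ : σ = Real.sqrt (Real.sqrt (u ^ 2 + v ^ 2) + v))
    (hθ : θ = (if u < 0 then (-1 : ℝ) else 1) * Real.sqrt (Real.sqrt (u ^ 2 + v ^ 2) - v))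
    (F Ft : Matrix (Fin 4) (Fin 4) ℝ)
    (hF : F = !![0, b3, -b2, e1; -b3, 0, b1, e2; b2, -b1, 0, e3; e1, e2, e3, 0])
    (hFt : Ft = !![0, -e3, e2, b1; e3, 0, -e1, b2; -e2, e1, 0, b3; b1, b2, b3, 0])
    (T : Matrix (Fin 4) (Fin 4) ℝ) (hT : T = F ^ 2 + Ft ^ 2) :
    Ft * T = (2 * σ * θ) • F - (σ ^ 2 - θ ^ 2) • Ft := by
  have hFt_mul_F : Ft * F = (σ * θ) • 1 := by
    rw [hσ, hθ, sqrt_add_mul_signed_sqrt_sub, hu, hF, hFt]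
    exact dualFieldTensor_mul_fieldTensor e1 e2 e3 b1 b2 b3
  have hsq : F ^ 2 - Ft ^ 2 = (σ ^ 2 - θ ^ 2) • 1 := by
    rw [hσ, hθ, sq_sqrt_add_sub_sq_signed_sqrt_sub, hv, mul_div_cancel₀ _ two_ne_zero, hF, hFt]
    exact fieldTensor_sq_sub_dualFieldTensor_sq e1 e2 e3 b1 b2 b3
  rw [hT, mul_sq_add_sq_of_mul_eq_smul_one hFt_mul_F hsq, mul_assoc]
end

section
/- T² = (σ² + θ²)²·I, where T = F² + F̃² and I is the 4×4 identity matrix. -/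
/-! The matrices `F` and `F̃` satisfy `F F̃ = F̃ F = u I` and `F² - F̃² = 2v I`. Hence the
cross terms of `(F² + F̃²)² - (F² - F̃²)²` are `2 (F² F̃² + F̃² F²) = 4u² I`, so
`T² = 4(u² + v²) I`.
On the other side `σ² + θ² = 2 √(u² + v²)`, the sign of `θ` being squared away. -/

theorem sq_mul_sq_eq_smul_one {K A : Type*} [CommSemiring K] [Semiring A] [Algebra K A]
    {a b : A} {c : K} (hab : a * b = c • 1) : a ^ 2 * b ^ 2 = c ^ 2 • 1 := by
  rw [sq, sq, mul_assoc, ← mul_assoc a b b, hab, smul_mul_assoc, one_mul, mul_smul_comm, hab,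
    smul_smul, sq]

theorem sq_add_sq_sq_eq_smul_one {K A : Type*} [CommRing K] [Ring A] [Algebra K A]
    {a b : A} {c d : K} (hab : a * b = c • 1) (hba : b * a = c • 1)
    (hsub : a ^ 2 - b ^ 2 = d • 1) :
    (a ^ 2 + b ^ 2) ^ 2 = (d ^ 2 + 4 * c ^ 2) • (1 : A) := by
  have hcross :
      (a ^ 2 + b ^ 2) ^ 2 = (a ^ 2 - b ^ 2) ^ 2 + 2 • (a ^ 2 * b ^ 2 + b ^ 2 * a ^ 2) := by
    noncomm_ring
  rw [hcross, hsub, sq_mul_sq_eq_smul_one hab, sq_mul_sq_eq_smul_one hba, smul_pow, one_pow]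
  module

section FieldMatrices

variable {R : Type*} [CommRing R] (e1 e2 e3 b1 b2 b3 : R)

def fieldMatrix : Matrix (Fin 4) (Fin 4) R :=
  !![0, b3, -b2, e1; -b3, 0, b1, e2; b2, -b1, 0, e3; e1, e2, e3, 0]

def dualFieldMatrix : Matrix (Fin 4) (Fin 4) R :=
  !![0, -e3, e2, b1; e3, 0, -e1, b2; -e2, e1, 0, b3; b1, b2, b3, 0]

theorem fieldMatrix_mul_dualFieldMatrix :
    fieldMatrix e1 e2 e3 b1 b2 b3 * dualFieldMatrix e1 e2 e3 b1 b2 b3 =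
      (e1 * b1 + e2 * b2 + e3 * b3) • 1 := by
  ext i j
  fin_cases i <;> fin_cases j <;>
    simp [fieldMatrix, dualFieldMatrix, Matrix.mul_apply, Fin.sum_univ_succ] <;> ring

theorem dualFieldMatrix_mul_fieldMatrix :
    dualFieldMatrix e1 e2 e3 b1 b2 b3 * fieldMatrix e1 e2 e3 b1 b2 b3 =
      (e1 * b1 + e2 * b2 + e3 * b3) • 1 := by
  ext i j
  fin_cases i <;> fin_cases j <;>
    simp [fieldMatrix, dualFieldMatrix, Matrix.mul_apply, Fin.sum_univ_succ] <;> ring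

theorem fieldMatrix_sq_sub_dualFieldMatrix_sq :
    fieldMatrix e1 e2 e3 b1 b2 b3 ^ 2 - dualFieldMatrix e1 e2 e3 b1 b2 b3 ^ 2 =
      ((e1 ^ 2 + e2 ^ 2 + e3 ^ 2) - (b1 ^ 2 + b2 ^ 2 + b3 ^ 2)) • 1 := by
  ext i j
  fin_cases i <;> fin_cases j <;>
    simp [fieldMatrix, dualFieldMatrix, sq] <;> ring

end FieldMatrices

theorem Real.sq_sqrt_sqrt_add_add_sq_sqrt_sqrt_sub (u v : ℝ) :
    √(√(u ^ 2 + v ^ 2) + v) ^ 2 + √(√(u ^ 2 + v ^ 2) - v) ^ 2 = 2 * √(u ^ 2 + v ^ 2) := by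
  have hv : |v| ≤ √(u ^ 2 + v ^ 2) := by
    rw [← Real.sqrt_sq_eq_abs]
    exact Real.sqrt_le_sqrt (le_add_of_nonneg_left (sq_nonneg u))
  obtain ⟨hneg, hpos⟩ := abs_le.1 hv
  rw [Real.sq_sqrt (by linarith), Real.sq_sqrt (by linarith)]
  ring

theorem T_sq
(e1 e2 e3 b1 b2 b3 u v σ θ : ℝ)
    (hu : u = e1 * b1 + e2 * b2 + e3 * b3)
    (hv : v = ((e1 ^ 2 + e2 ^ 2 + e3 ^ 2) - (b1 ^ 2 + b2 ^ 2 + b3 ^ 2)) / 2)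
    (hσ : σ = Real.sqrt (Real.sqrt (u ^ 2 + v ^ 2) + v))
    (hθ : θ = (if u < 0 then (-1 : ℝ) else 1) * Real.sqrt (Real.sqrt (u ^ 2 + v ^ 2) - v))
    (F Ft : Matrix (Fin 4) (Fin 4) ℝ)
    (hF : F = !![0, b3, -b2, e1; -b3, 0, b1, e2; b2, -b1, 0, e3; e1, e2, e3, 0])
    (hFt : Ft = !![0, -e3, e2, b1; e3, 0, -e1, b2; -e2, e1, 0, b3; b1, b2, b3, 0])
    (T : Matrix (Fin 4) (Fin 4) ℝ) (hT : T = F ^ 2 + Ft ^ 2) :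
    T ^ 2 = ((σ ^ 2 + θ ^ 2) ^ 2) • (1 : Matrix (Fin 4) (Fin 4) ℝ) := by
  have hθ2 : θ ^ 2 = √(√(u ^ 2 + v ^ 2) - v) ^ 2 := by
    rw [hθ, mul_pow]
    split_ifs <;> norm_num
  have hscalar : (σ ^ 2 + θ ^ 2) ^ 2 = (2 * v) ^ 2 + 4 * u ^ 2 := by
    rw [hσ, hθ2, Real.sq_sqrt_sqrt_add_add_sq_sqrt_sqrt_sub, mul_pow,
      Real.sq_sqrt (by positivity)]
    ring
  have hsub : F ^ 2 - Ft ^ 2 = (2 * v) • 1 := by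
    rw [hF, hFt, hv, mul_div_cancel₀ _ two_ne_zero]
    exact fieldMatrix_sq_sub_dualFieldMatrix_sq e1 e2 e3 b1 b2 b3
  have hmul : F * Ft = u • 1 :=
    hF ▸ hFt ▸ hu ▸ fieldMatrix_mul_dualFieldMatrix e1 e2 e3 b1 b2 b3
  have hmul' : Ft * F = u • 1 :=
    hF ▸ hFt ▸ hu ▸ dualFieldMatrix_mul_fieldMatrix e1 e2 e3 b1 b2 b3
  rw [hT, hscalar]
  exact sq_add_sq_sq_eq_smul_one hmul hmul' hsub
end

section
/- Generalized Euler–Rodrigues formula: if σ² + θ² > 0, then for every real t, exp(tF) = ((cosh(tσ)+cos(tθ))/2)·I + ((σ·sinh(tσ)+θ·sin(tθ))/(σ²+θ²))·F + ((θ·sinh(tσ)−σ·sin(tθ))/(σ²+θ²))·F̃ + ((cosh(tσ)−cos(tθ))/(2(σ²+θ²)))·T, where exp denotes the matrix exponential. -/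
/-!
The field tensor and its dual satisfy `F F̃ = u I` and `F̃² = F² - 2v I`, and `σ + iθ` is
the principal square root of `2(v + iu)`, so `σθ = u` and `σ² - θ² = 2v`. Hence left
multiplication by `F` preserves the span of `I, F, F̃, T`, and the right-hand side, whose four
coefficients solve the corresponding linear system, satisfies `X' = F X`, `X 0 = I`.
Uniqueness for this ODE identifies it with `exp (t F)`.
-/

open NormedSpace

theorem exp_smul_eq_of_hasDerivAt {A : Type*} [NormedRing A] [NormedAlgebra ℝ A] [CompleteSpace A]
    {f : A} {X : ℝ → A} (hX : ∀ t, HasDerivAt X (f * X t) t) (h0 : X 0 = 1) (t : ℝ) :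
    exp (t • f) = X t := by
  let : NormedAlgebra ℚ A := .restrictScalars ℚ ℝ A
  have hconst : ∀ s, HasDerivAt (fun s : ℝ => exp (s • -f) * X s) 0 s := by
    intro s
    refine ((hasDerivAt_exp_smul_const' (-f) s).mul (hX s)).congr_deriv ?_
    rw [← mul_assoc, (((Commute.refl f).neg_left).smul_left s).exp_left.eq, neg_mul, neg_mul,
      neg_add_cancel]
  have h1 : exp (t • -f) * X t = 1 := by
    simpa [h0] using is_const_of_deriv_eq_zero (fun s => (hconst s).differentiableAt)
      (fun s => (hconst s).deriv) t 0
  have h2 : exp (t • f) * exp (t • -f) = 1 := by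
    rw [← exp_add_of_commute ((Commute.refl f).smul_left t |>.neg_right.smul_right t)]
    simp
  calc exp (t • f) = exp (t • f) * (exp (t • -f) * X t) := by rw [h1, mul_one]
    _ = X t := by rw [← mul_assoc, h2, one_mul]

section Algebra

variable {A : Type*} [Ring A] [Algebra ℝ A]

theorem mul_smul_one_add_smul_add_smul_add_smul {F Ft : A} {u v : ℝ}
    (hFFt : F * Ft = u • 1) (hFt : Ft * Ft = F * F - (2 * v) • 1) (a b c d : ℝ) :
    F * (a • 1 + b • F + c • Ft + d • (F ^ 2 + Ft ^ 2)) =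
      (b * v + c * u) • 1 + (a + 2 * v * d) • F + (2 * u * d) • Ft
        + (b / 2) • (F ^ 2 + Ft ^ 2) := by
  have h1 : F * (Ft * Ft) = u • Ft := by rw [← mul_assoc, hFFt, smul_mul_assoc, one_mul]
  have h2 : F * (Ft * Ft) = F * (F * F) - (2 * v) • F := by
    rw [hFt, mul_sub, mul_smul_comm, mul_one]
  simp only [mul_add, mul_smul_comm, mul_one, pow_two, hFFt]
  linear_combination (norm := module) (2 * d) • h1 - d • h2 - (b / 2) • hFt

noncomputable def eulerRodrigues (σ θ : ℝ) (F Ft : A) (t : ℝ) : A :=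
  ((Real.cosh (t * σ) + Real.cos (t * θ)) / 2) • 1
    + ((σ * Real.sinh (t * σ) + θ * Real.sin (t * θ)) / (σ ^ 2 + θ ^ 2)) • F
    + ((θ * Real.sinh (t * σ) - σ * Real.sin (t * θ)) / (σ ^ 2 + θ ^ 2)) • Ft
    + ((Real.cosh (t * σ) - Real.cos (t * θ)) / (2 * (σ ^ 2 + θ ^ 2))) • (F ^ 2 + Ft ^ 2)

theorem eulerRodrigues_zero (σ θ : ℝ) (F Ft : A) : eulerRodrigues σ θ F Ft 0 = 1 := by
  simp [eulerRodrigues]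

end Algebra

section BanachAlgebra

variable {A : Type*} [NormedRing A] [NormedAlgebra ℝ A] {σ θ : ℝ} {F Ft : A}

theorem hasDerivAt_eulerRodrigues (hs : σ ^ 2 + θ ^ 2 ≠ 0) (hFFt : F * Ft = (σ * θ) • 1)
    (hFt : Ft * Ft = F * F - (σ ^ 2 - θ ^ 2) • 1) (t : ℝ) :
    HasDerivAt (eulerRodrigues σ θ F Ft) (F * eulerRodrigues σ θ F Ft t) t := by
  rw [eulerRodrigues, mul_smul_one_add_smul_add_smul_add_smul (v := (σ ^ 2 - θ ^ 2) / 2) hFFt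
    (by rwa [mul_div_cancel₀ _ two_ne_zero])]
  have hσ : HasDerivAt (· * σ) σ t := hasDerivAt_mul_const σ
  have hθ : HasDerivAt (· * θ) θ t := hasDerivAt_mul_const θ
  refine (((HasDerivAt.smul_const ?_ 1).add (HasDerivAt.smul_const ?_ F)).add
    (HasDerivAt.smul_const ?_ Ft)).add (HasDerivAt.smul_const ?_ _)
  · refine ((hσ.cosh.add hθ.cos).div_const 2).congr_deriv ?_
    field_simp
    ring
  · refine (((hσ.sinh.const_mul σ).add (hθ.sin.const_mul θ)).div_const _).congr_deriv ?_
    field_simp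
    ring
  · refine (((hσ.sinh.const_mul θ).sub (hθ.sin.const_mul σ)).div_const _).congr_deriv ?_
    field_simp
  · refine ((hσ.cosh.sub hθ.cos).div_const _).congr_deriv ?_
    field_simp
    ring

theorem exp_smul_eq_eulerRodrigues [CompleteSpace A] (hs : σ ^ 2 + θ ^ 2 ≠ 0)
    (hFFt : F * Ft = (σ * θ) • 1) (hFt : Ft * Ft = F * F - (σ ^ 2 - θ ^ 2) • 1) (t : ℝ) :
    exp (t • F) = eulerRodrigues σ θ F Ft t :=
  exp_smul_eq_of_hasDerivAt (hasDerivAt_eulerRodrigues hs hFFt hFt)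
    (eulerRodrigues_zero σ θ F Ft) t

end BanachAlgebra

section PrincipalSqrt

variable {u v σ θ : ℝ} (hσ : σ = √(√(u ^ 2 + v ^ 2) + v))
  (hθ : θ = (if u < 0 then (-1 : ℝ) else 1) * √(√(u ^ 2 + v ^ 2) - v))
include hσ hθ

theorem sq_sub_sq_eq_of_eq_sqrt : σ ^ 2 - θ ^ 2 = 2 * v := by
  obtain ⟨hv₁, hv₂⟩ := abs_le.mp (Real.abs_le_sqrt (le_add_of_nonneg_left (sq_nonneg u) :
    v ^ 2 ≤ u ^ 2 + v ^ 2))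
  rw [hσ, hθ, mul_pow, Real.sq_sqrt (by linarith), Real.sq_sqrt (by linarith)]
  split_ifs <;> ring

theorem mul_eq_of_eq_sqrt : σ * θ = u := by
  obtain ⟨hv₁, hv₂⟩ := abs_le.mp (Real.abs_le_sqrt (le_add_of_nonneg_left (sq_nonneg u) :
    v ^ 2 ≤ u ^ 2 + v ^ 2))
  have hprod : √(√(u ^ 2 + v ^ 2) + v) * √(√(u ^ 2 + v ^ 2) - v) = |u| := by
    rw [← Real.sqrt_mul (by linarith), ← Real.sqrt_sq_eq_abs]
    congr 1
    nlinarith [Real.sq_sqrt (add_nonneg (sq_nonneg u) (sq_nonneg v))]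
  rw [hσ, hθ, mul_left_comm, hprod]
  split_ifs with hu
  · rw [abs_of_neg hu, neg_one_mul, neg_neg]
  · rw [abs_of_nonneg (not_lt.mp hu), one_mul]

end PrincipalSqrt

theorem fieldTensor_mul_dual (e1 e2 e3 b1 b2 b3 : ℝ) :
    !![0, b3, -b2, e1; -b3, 0, b1, e2; b2, -b1, 0, e3; e1, e2, e3, 0] *
      !![0, -e3, e2, b1; e3, 0, -e1, b2; -e2, e1, 0, b3; b1, b2, b3, 0] =
      (e1 * b1 + e2 * b2 + e3 * b3) • (1 : Matrix (Fin 4) (Fin 4) ℝ) := by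
  ext i j
  fin_cases i <;> fin_cases j <;> simp [Matrix.mul_apply, Fin.sum_univ_four] <;> ring

theorem dual_mul_self (e1 e2 e3 b1 b2 b3 : ℝ) :
    !![0, -e3, e2, b1; e3, 0, -e1, b2; -e2, e1, 0, b3; b1, b2, b3, 0] *
      !![0, -e3, e2, b1; e3, 0, -e1, b2; -e2, e1, 0, b3; b1, b2, b3, 0] =
      !![0, b3, -b2, e1; -b3, 0, b1, e2; b2, -b1, 0, e3; e1, e2, e3, 0] *
        !![0, b3, -b2, e1; -b3, 0, b1, e2; b2, -b1, 0, e3; e1, e2, e3, 0] -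
      ((e1 ^ 2 + e2 ^ 2 + e3 ^ 2) - (b1 ^ 2 + b2 ^ 2 + b3 ^ 2)) •
        (1 : Matrix (Fin 4) (Fin 4) ℝ) := by
  ext i j
  fin_cases i <;> fin_cases j <;> simp [Matrix.mul_apply, Fin.sum_univ_four] <;> ring

theorem euler_rodrigues
(e1 e2 e3 b1 b2 b3 u v σ θ : ℝ)
    (hu : u = e1 * b1 + e2 * b2 + e3 * b3)
    (hv : v = ((e1 ^ 2 + e2 ^ 2 + e3 ^ 2) - (b1 ^ 2 + b2 ^ 2 + b3 ^ 2)) / 2)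
    (hσ : σ = Real.sqrt (Real.sqrt (u ^ 2 + v ^ 2) + v))
    (hθ : θ = (if u < 0 then (-1 : ℝ) else 1) * Real.sqrt (Real.sqrt (u ^ 2 + v ^ 2) - v))
    (F Ft : Matrix (Fin 4) (Fin 4) ℝ)
    (hF : F = !![0, b3, -b2, e1; -b3, 0, b1, e2; b2, -b1, 0, e3; e1, e2, e3, 0])
    (hFt : Ft = !![0, -e3, e2, b1; e3, 0, -e1, b2; -e2, e1, 0, b3; b1, b2, b3, 0])
    (T : Matrix (Fin 4) (Fin 4) ℝ) (hT : T = F ^ 2 + Ft ^ 2)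
    (hpos : σ ^ 2 + θ ^ 2 > 0) :
    ∀ t : ℝ, NormedSpace.exp (t • F) =
      ((Real.cosh (t * σ) + Real.cos (t * θ)) / 2) • (1 : Matrix (Fin 4) (Fin 4) ℝ)
      + ((σ * Real.sinh (t * σ) + θ * Real.sin (t * θ)) / (σ ^ 2 + θ ^ 2)) • F
      + ((θ * Real.sinh (t * σ) - σ * Real.sin (t * θ)) / (σ ^ 2 + θ ^ 2)) • Ft
      + ((Real.cosh (t * σ) - Real.cos (t * θ)) / (2 * (σ ^ 2 + θ ^ 2))) • T := by
  intro t
  -- `exp` only depends on the topology, so any Banach-algebra norm on matrices will do.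
  let _ : NormedRing (Matrix (Fin 4) (Fin 4) ℝ) := Matrix.linftyOpNormedRing
  let _ : NormedAlgebra ℝ (Matrix (Fin 4) (Fin 4) ℝ) := Matrix.linftyOpNormedAlgebra
  have hFFt : F * Ft = (σ * θ) • 1 := by
    rw [mul_eq_of_eq_sqrt hσ hθ, hu, hF, hFt, fieldTensor_mul_dual]
  have hFt2 : Ft * Ft = F * F - (σ ^ 2 - θ ^ 2) • 1 := by
    rw [sq_sub_sq_eq_of_eq_sqrt hσ hθ, hv, mul_div_cancel₀ _ two_ne_zero, hF, hFt,
      dual_mul_self]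
  rw [hT]
  exact exp_smul_eq_eulerRodrigues hpos.ne' hFFt hFt2 t
end
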